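/- Let I be a negative definite symmetric integer matrix indexed by a finite set V (the intersection matrix (E_i, E_j)). For a fixed l' in the dual lattice L' and a subset I₀ ⊆ V, consider subsets J ⊇ I₀ of V satisfying the property (∗): there is no j ∈ V \ J with (E_j, l' + E_J) > 0, where E_J = Σ_{j∈J} E_j. If J₁ and J₂ both contain I₀ and satisfy (∗), then J₁ ∩ J₂ also satisfies (∗). Consequently there is a unique minimal subset J(l', I₀) containing I₀ and satisfying (∗). -/
import Mathlib


open Finset

/-- The defining property (∗) of `J(l',I₀)`: `J` contains `I₀` and no `j` outside
`J` pairs positively with `l' + E_J`. -/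
def IsGoodSet {V : Type*} [Fintype V] [DecidableEq V] (B : V → V → ℚ)
    (l' : V → ℚ) (I₀ : Finset V) (J : Finset V) : Prop :=
  I₀ ⊆ J ∧ ∀ j ∉ J, ¬ (0 < ∑ i : V, B j i * (l' i + if i ∈ J then 1 else 0))

lemma key_mono {V : Type*} [Fintype V] [DecidableEq V] (B : V → V → ℚ)
    (hoff : ∀ i j, i ≠ j → 0 ≤ B i j) (l' : V → ℚ) (J J₁ : Finset V)
    (hJJ : J ⊆ J₁) (j : V) (hj : j ∉ J₁)
    (h₁ : ¬ (0 < ∑ i : V, B j i * (l' i + if i ∈ J₁ then 1 else 0))) :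
    ¬ (0 < ∑ i : V, B j i * (l' i + if i ∈ J then 1 else 0)) := by
  intro hpos
  apply h₁
  refine lt_of_lt_of_le hpos (Finset.sum_le_sum fun i _ => ?_)
  by_cases hij : i = j
  · subst hij
    have h1 : i ∉ J := fun h => hj (hJJ h)
    simp [h1, hj]
  · have hb : 0 ≤ B j i := hoff j i (fun h => hij h.symm)
    apply mul_le_mul_of_nonneg_left _ hb
    have : (if i ∈ J then (1:ℚ) else 0) ≤ (if i ∈ J₁ then 1 else 0) := by
      by_cases hi : i ∈ J
      · simp [hi, hJJ hi]
      · simp only [hi, if_neg, if_false]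
        split <;> norm_num
    linarith

/-- Intersection stability of property (∗) and existence of a unique minimal
set `J(l',I₀)` containing `I₀` and satisfying (∗). -/
theorem good_set_inter_and_min (V : Type*) [Fintype V] [DecidableEq V]
    (B : V → V → ℚ) (hsym : ∀ i j, B i j = B j i)
    (hoff : ∀ i j, i ≠ j → 0 ≤ B i j)
    (hneg : ∀ x : V → ℚ, x ≠ 0 → ∑ i : V, ∑ j : V, x i * B i j * x j < 0)
    (l' : V → ℚ) (I₀ : Finset V) :
    (∀ J₁ J₂, IsGoodSet B l' I₀ J₁ → IsGoodSet B l' I₀ J₂ →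
      IsGoodSet B l' I₀ (J₁ ∩ J₂)) ∧
    (∃! J, IsGoodSet B l' I₀ J ∧ ∀ J', IsGoodSet B l' I₀ J' → J ⊆ J') := by
  classical
  have hinter : ∀ J₁ J₂, IsGoodSet B l' I₀ J₁ → IsGoodSet B l' I₀ J₂ →
      IsGoodSet B l' I₀ (J₁ ∩ J₂) := by
    intro J₁ J₂ h₁ h₂
    refine ⟨Finset.subset_inter h₁.1 h₂.1, ?_⟩
    intro j hj
    rcases (by rw [Finset.mem_inter] at hj; exact not_and_or.mp hj :
        j ∉ J₁ ∨ j ∉ J₂) with hj1 | hj2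
    · exact key_mono B hoff l' (J₁ ∩ J₂) J₁ (Finset.inter_subset_left) j hj1
        (h₁.2 j hj1)
    · exact key_mono B hoff l' (J₁ ∩ J₂) J₂ (Finset.inter_subset_right) j hj2
        (h₂.2 j hj2)
  refine ⟨hinter, ?_⟩
  -- the set of good sets, as a Finset
  have huniv : IsGoodSet B l' I₀ (Finset.univ : Finset V) :=
    ⟨Finset.subset_univ _, fun j hj => absurd (Finset.mem_univ j) hj⟩
  set S : Finset (Finset V) :=
    Finset.univ.filter (fun J => IsGoodSet B l' I₀ J) with hS
  have hSne : S.Nonempty := ⟨Finset.univ, by simp [hS, huniv]⟩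
  obtain ⟨J, hJS, hJmin⟩ := S.exists_min_image Finset.card hSne
  have hJgood : IsGoodSet B l' I₀ J := by simpa [hS] using hJS
  have hmin : ∀ J', IsGoodSet B l' I₀ J' → J ⊆ J' := by
    intro J' hJ'
    have hgoodi := hinter J J' hJgood hJ'
    have hmem : J ∩ J' ∈ S := by simp [hS, hgoodi]
    have hcard := hJmin _ hmem
    have := Finset.eq_of_subset_of_card_le (Finset.inter_subset_left (s₂ := J')) hcard
    rw [← this]
    exact Finset.inter_subset_right
  refine ⟨J, ⟨hJgood, hmin⟩, ?_⟩
  rintro J' ⟨hJ'good, hJ'min⟩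
  exact Finset.Subset.antisymm (hJ'min J hJgood) (hmin J' hJ'good)
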